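/- arXiv:2603.13784 — 4 statements merged into one kernel-verified Lean document; each statement's English description precedes it below -/
import Mathlib

section
/- Let p, q ≥ 1 be integers, π ∈ (0,1), ω₁ > 0, ω₂ > 0, and let α_{si} ≥ 0 (s = 1,2; i = 1,…,q) and β_{sj} ≥ 0 (s = 1,2; j = 1,…,p) be reals. Suppose there exist reals ℓ₁ > 0, ℓ₂ > 0 and m such that (1 − Σ_{j=1}^p β_{sj})·ℓ_s = ω_s + (Σ_{i=1}^q α_{si})·m for s = 1,2, and m = π·ℓ₁ + (1 − π)·ℓ₂. Then Σ_{j=1}^p β_{sj} < 1 for s = 1,2, and π·(Σ_{i=1}^q α_{1i})/(1 − Σ_{j=1}^p β_{1j}) + (1 − π)·(Σ_{i=1}^q α_{2i})/(1 − Σ_{j=1}^p β_{2j}) < 1. -/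
/-- Algebraic core of Proposition 3: the stationary mean equations force
`Σ_j β_{sj} < 1` (s = 1,2) and
`π (Σ_i α_{1i})/(1 - Σ_j β_{1j}) + (1-π)(Σ_i α_{2i})/(1 - Σ_j β_{2j}) < 1`. -/
theorem stmt_6 (p q : ℕ) (hp : 1 ≤ p) (hq : 1 ≤ q)
    (π : ℝ) (hπ : π ∈ Set.Ioo (0 : ℝ) 1)
    (ω₁ ω₂ : ℝ) (hω₁ : 0 < ω₁) (hω₂ : 0 < ω₂)
    (α₁ α₂ : Fin q → ℝ) (β₁ β₂ : Fin p → ℝ)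
    (hα₁ : ∀ i, 0 ≤ α₁ i) (hα₂ : ∀ i, 0 ≤ α₂ i)
    (hβ₁ : ∀ j, 0 ≤ β₁ j) (hβ₂ : ∀ j, 0 ≤ β₂ j)
    (ℓ₁ ℓ₂ m : ℝ) (hℓ₁ : 0 < ℓ₁) (hℓ₂ : 0 < ℓ₂)
    (he₁ : (1 - ∑ j, β₁ j) * ℓ₁ = ω₁ + (∑ i, α₁ i) * m)
    (he₂ : (1 - ∑ j, β₂ j) * ℓ₂ = ω₂ + (∑ i, α₂ i) * m)
    (hm : m = π * ℓ₁ + (1 - π) * ℓ₂) :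
    ((∑ j, β₁ j) < 1 ∧ (∑ j, β₂ j) < 1) ∧
      π * (∑ i, α₁ i) / (1 - ∑ j, β₁ j) +
        (1 - π) * (∑ i, α₂ i) / (1 - ∑ j, β₂ j) < 1 := by
  obtain ⟨hπ0, hπ1⟩ := hπ
  set A₁ := ∑ i, α₁ i with hA₁
  set A₂ := ∑ i, α₂ i with hA₂
  set B₁ := ∑ j, β₁ j with hB₁
  set B₂ := ∑ j, β₂ j with hB₂
  have hA₁0 : 0 ≤ A₁ := Finset.sum_nonneg fun i _ => hα₁ i
  have hA₂0 : 0 ≤ A₂ := Finset.sum_nonneg fun i _ => hα₂ i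
  have hm0 : 0 < m := by
    have := mul_pos hπ0 hℓ₁
    have := mul_pos (sub_pos.mpr hπ1) hℓ₂
    nlinarith
  have h1 : 0 < 1 - B₁ := by
    nlinarith [he₁, mul_nonneg hA₁0 hm0.le, hℓ₁, hω₁]
  have h2 : 0 < 1 - B₂ := by
    nlinarith [he₂, mul_nonneg hA₂0 hm0.le, hℓ₂, hω₂]
  refine ⟨⟨by linarith, by linarith⟩, ?_⟩
  rw [div_add_div _ _ (ne_of_gt h1) (ne_of_gt h2), div_lt_one (mul_pos h1 h2)]
  have key : (π * A₁ * (1 - B₂) + (1 - B₁) * ((1 - π) * A₂)) * m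
      + (π * ω₁ * (1 - B₂) + (1 - π) * ω₂ * (1 - B₁)) = (1 - B₁) * (1 - B₂) * m := by
    linear_combination (-(π * (1 - B₂))) * he₁ - ((1 - π) * (1 - B₁)) * he₂
      - ((1 - B₁) * (1 - B₂)) * hm
  nlinarith [key, mul_pos (mul_pos hπ0 hω₁) h2,
    mul_pos (mul_pos (sub_pos.mpr hπ1) hω₂) h1, hm0]
end

section
/- Assume α₁ ≥ 0, α₂ ≥ 0, β₁ ≥ 0, β₂ ≥ 0 and 0 ≤ π ≤ 1. Then (T + √Δ)/2 < 1 if and only if both α₁π(1 − β₂) + α₂(1 − π)(1 − β₁) < (1 − β₁)(1 − β₂) and T < 2 hold. -/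
/-- Spectral radius criterion: with `T = α₁π + β₁ + α₂(1-π) + β₂`,
`D = α₁πβ₂ + α₂(1-π)β₁ + β₁β₂`, `Δ = T² - 4D`, under nonnegative parameters and
`0 ≤ π ≤ 1`, `(T + √Δ)/2 < 1` iff
`α₁π(1-β₂) + α₂(1-π)(1-β₁) < (1-β₁)(1-β₂)` and `T < 2`. -/
theorem stmt_9 (π α₁ α₂ β₁ β₂ : ℝ) (hα₁ : 0 ≤ α₁) (hα₂ : 0 ≤ α₂)
    (hβ₁ : 0 ≤ β₁) (hβ₂ : 0 ≤ β₂) (hπ0 : 0 ≤ π) (hπ1 : π ≤ 1) :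
    let T : ℝ := α₁ * π + β₁ + α₂ * (1 - π) + β₂
    let D : ℝ := α₁ * π * β₂ + α₂ * (1 - π) * β₁ + β₁ * β₂
    let Δ : ℝ := T ^ 2 - 4 * D
    ((T + Real.sqrt Δ) / 2 < 1 ↔
      (α₁ * π * (1 - β₂) + α₂ * (1 - π) * (1 - β₁) < (1 - β₁) * (1 - β₂) ∧ T < 2)) := by
  set T : ℝ := α₁ * π + β₁ + α₂ * (1 - π) + β₂ with hT
  set D : ℝ := α₁ * π * β₂ + α₂ * (1 - π) * β₁ + β₁ * β₂ with hD
  set Δ : ℝ := T ^ 2 - 4 * D with hΔ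
  have hkey : (1 - β₁) * (1 - β₂) - (α₁ * π * (1 - β₂) + α₂ * (1 - π) * (1 - β₁))
      = 1 - T + D := by rw [hT, hD]; ring
  have hs : 0 ≤ Real.sqrt Δ := Real.sqrt_nonneg _
  constructor
  · intro h
    have hT2 : T < 2 := by linarith
    have h2 : Real.sqrt Δ < 2 - T := by linarith
    have h3 : Δ < (2 - T) ^ 2 := (Real.sqrt_lt' (by linarith)).mp h2
    refine ⟨by nlinarith [h3], hT2⟩
  · rintro ⟨h1, hT2⟩
    have h3 : Δ < (2 - T) ^ 2 := by nlinarith [hkey]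
    have := (Real.sqrt_lt' (by linarith : (0:ℝ) < 2 - T)).mpr h3
    linarith
end

section
/- Assume α₁ ≥ 0, α₂ ≥ 0, β₁ ≥ 0, β₂ ≥ 0 and 0 < π < 1. Then (T + √Δ)/2 < 1 if and only if β₁ < 1, β₂ < 1, and α₁π/(1 − β₁) + α₂(1 − π)/(1 − β₂) < 1. -/
/-- Proposition 4: with `T = α₁π + β₁ + α₂(1-π) + β₂`, `D = α₁πβ₂ + α₂(1-π)β₁ + β₁β₂`,
`Δ = T² - 4D`, under nonnegative parameters and `0 < π < 1`, the spectral radius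
condition `(T + √Δ)/2 < 1` holds iff `β₁ < 1`, `β₂ < 1`, and
`α₁π/(1-β₁) + α₂(1-π)/(1-β₂) < 1`. -/
theorem stmt_10 (π α₁ α₂ β₁ β₂ : ℝ) (hα₁ : 0 ≤ α₁) (hα₂ : 0 ≤ α₂)
    (hβ₁ : 0 ≤ β₁) (hβ₂ : 0 ≤ β₂) (hπ0 : 0 < π) (hπ1 : π < 1) :
    let T : ℝ := α₁ * π + β₁ + α₂ * (1 - π) + β₂
    let D : ℝ := α₁ * π * β₂ + α₂ * (1 - π) * β₁ + β₁ * β₂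
    let Δ : ℝ := T ^ 2 - 4 * D
    ((T + Real.sqrt Δ) / 2 < 1 ↔
      (β₁ < 1 ∧ β₂ < 1 ∧
        α₁ * π / (1 - β₁) + α₂ * (1 - π) / (1 - β₂) < 1)) := by
  intro T D Δ
  have hTd : T = α₁ * π + β₁ + α₂ * (1 - π) + β₂ := rfl
  have hDd : D = α₁ * π * β₂ + α₂ * (1 - π) * β₁ + β₁ * β₂ := rfl
  have hΔd : Δ = T ^ 2 - 4 * D := rfl
  clear_value T D Δ
  subst hΔd hTd hDd
  set T : ℝ := α₁ * π + β₁ + α₂ * (1 - π) + β₂ with hTd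
  set D : ℝ := α₁ * π * β₂ + α₂ * (1 - π) * β₁ + β₁ * β₂ with hDd
  set Δ : ℝ := T ^ 2 - 4 * D with hΔd
  clear_value T D Δ
  have ha : 0 ≤ α₁ * π := mul_nonneg hα₁ hπ0.le
  have hb : 0 ≤ α₂ * (1 - π) := mul_nonneg hα₂ (by linarith)
  have hΔ : 0 ≤ Δ := by
    rw [hΔd, hTd, hDd]
    nlinarith [sq_nonneg (α₁ * π + β₁ - α₂ * (1 - π) - β₂), mul_nonneg ha hb]
  have hs := Real.sqrt_nonneg Δ
  constructor
  · intro h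
    have hT : T < 2 := by linarith
    have hsq : Real.sqrt Δ ^ 2 = Δ := Real.sq_sqrt hΔ
    have hΔlt : Δ < (2 - T) ^ 2 := by nlinarith
    have hkey : 0 < 1 - T + D := by rw [hΔd] at hΔlt; nlinarith
    rw [hTd] at hT
    rw [hTd, hDd] at hkey
    have hb1 : β₁ < 1 := by
      by_contra hc
      push_neg at hc
      nlinarith [mul_nonneg (by linarith : (0:ℝ) ≤ β₁ - 1)
        (by linarith : (0:ℝ) ≤ 1 - β₂ - α₂ * (1 - π)),
        mul_nonneg ha (by linarith : (0:ℝ) ≤ 1 - β₂)]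
    have hb2 : β₂ < 1 := by
      by_contra hc
      push_neg at hc
      nlinarith [mul_nonneg (by linarith : (0:ℝ) ≤ β₂ - 1)
        (by linarith : (0:ℝ) ≤ 1 - β₁ - α₁ * π),
        mul_nonneg hb (by linarith : (0:ℝ) ≤ 1 - β₁)]
    refine ⟨hb1, hb2, ?_⟩
    have d1 : (0:ℝ) < 1 - β₁ := by linarith
    have d2 : (0:ℝ) < 1 - β₂ := by linarith
    rw [div_add_div _ _ (ne_of_gt d1) (ne_of_gt d2), div_lt_one (mul_pos d1 d2)]
    nlinarith
  · rintro ⟨hb1, hb2, h3⟩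
    have d1 : (0:ℝ) < 1 - β₁ := by linarith
    have d2 : (0:ℝ) < 1 - β₂ := by linarith
    rw [div_add_div _ _ (ne_of_gt d1) (ne_of_gt d2), div_lt_one (mul_pos d1 d2)] at h3
    have haa : α₁ * π < 1 - β₁ := by
      nlinarith [mul_nonneg hb d1.le]
    have hbb : α₂ * (1 - π) < 1 - β₂ := by
      nlinarith [mul_nonneg ha d2.le]
    have hT : T < 2 := by rw [hTd]; linarith
    have hkey : 0 < 1 - T + D := by
      rw [hTd, hDd]; nlinarith
    have hΔlt : Δ < (2 - T) ^ 2 := by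
      rw [hΔd]; nlinarith
    have hsqrt : Real.sqrt Δ < 2 - T :=
      (Real.sqrt_lt' (by linarith)).2 hΔlt
    linarith
end

section
/- Let (w_t)_{t≥1} be i.i.d. real random variables with E[w₁] = 1 and E[(w₁ − 1)²] = 1, and let k ≥ 1. Let (d_{t,n})_{1 ≤ t ≤ n} be a deterministic triangular array of vectors in ℝ^k and d⋆ ∈ ℝ^k such that (1/n)·Σ_{t=1}^n d_{t,n} → d⋆ as n → ∞ and limsup_{n→∞} (1/n)·Σ_{t=1}^n ‖d_{t,n}‖² < ∞. Then (1/n)·Σ_{t=1}^n w_t·d_{t,n} converges to d⋆ in probability, i.e., for every ε > 0, P(‖(1/n)·Σ_{t=1}^n w_t·d_{t,n} − d⋆‖ > ε) → 0 as n → ∞. -/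
open MeasureTheory ProbabilityTheory Filter Topology
open scoped RealInnerProductSpace

/-!
Write `w_t = 1 + v_t`. The deterministic part `n⁻¹ Σ d_{t,n}` tends to `d⋆` by assumption. The
centred weights `v_t` are orthonormal in `L²(P)` (independent, mean `0`, variance `1`), so
`E‖n⁻¹ Σ v_t d_{t,n}‖² = n⁻² Σ ‖d_{t,n}‖² = O(1/n)`, and convergence in `L²` implies convergence
in probability.
-/

section

variable {Ω ι E : Type*} {m : MeasurableSpace Ω} {μ : Measure Ω}
  [NormedAddCommGroup E] [InnerProductSpace ℝ E] {X : ι → Ω → ℝ}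

theorem norm_sum_smul_sq (s : Finset ι) (x : ι → ℝ) (a : ι → E) :
    ‖∑ i ∈ s, x i • a i‖ ^ 2 = ∑ i ∈ s, ∑ j ∈ s, x i * x j * ⟪a i, a j⟫ := by
  rw [← real_inner_self_eq_norm_sq, sum_inner]
  simp only [inner_sum, real_inner_smul_left, real_inner_smul_right]
  exact Finset.sum_congr rfl fun i _ => Finset.sum_congr rfl fun j _ => by ring

theorem memLp_sum_smul (hX : ∀ i, MemLp (X i) 2 μ) (s : Finset ι) (a : ι → E) :
    MemLp (fun ω => ∑ i ∈ s, X i ω • a i) 2 μ := by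
  have := memLp_finsetSum' s fun i _ => (memLp_top_const (μ := μ) (a i)).smul (r := 2) (hX i)
  simpa [Finset.sum_fn] using this

theorem integral_norm_sum_smul_sq [DecidableEq ι] (hX : ∀ i, MemLp (X i) 2 μ)
    (horth : ∀ i j, ∫ ω, X i ω * X j ω ∂μ = if i = j then 1 else 0) (s : Finset ι) (a : ι → E) :
    ∫ ω, ‖∑ i ∈ s, X i ω • a i‖ ^ 2 ∂μ = ∑ i ∈ s, ‖a i‖ ^ 2 := by
  have hint : ∀ i j, Integrable (fun ω => X i ω * X j ω * ⟪a i, a j⟫) μ := fun i j =>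
    ((hX i).integrable_mul (hX j)).mul_const _
  simp_rw [norm_sum_smul_sq]
  rw [integral_finsetSum _ fun i _ => integrable_finsetSum _ fun j _ => hint i j]
  refine Finset.sum_congr rfl fun i hi => ?_
  rw [integral_finsetSum _ fun j _ => hint i j]
  simp_rw [integral_mul_const, horth, ite_mul, one_mul, zero_mul]
  rw [Finset.sum_ite_eq s i, if_pos hi, real_inner_self_eq_norm_sq]

theorem integral_mul_eq_ite_of_indepFun [DecidableEq ι]
    (hindep : Pairwise fun i j => IndepFun (X i) (X j) μ) (hX : ∀ i, MemLp (X i) 2 μ)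
    (hmean : ∀ i, ∫ ω, X i ω ∂μ = 0) (hsq : ∀ i, ∫ ω, X i ω ^ 2 ∂μ = 1) (i j : ι) :
    ∫ ω, X i ω * X j ω ∂μ = if i = j then 1 else 0 := by
  split_ifs with hij
  · subst hij
    simpa [sq] using hsq i
  · rw [(hindep hij).integral_fun_mul_eq_mul_integral (hX i).1 (hX j).1, hmean, zero_mul]

theorem integral_sub_mul_sub_eq_ite [DecidableEq ι] [IsProbabilityMeasure μ] {w : ι → Ω → ℝ}
    {i₀ : ι} {c : ℝ} (hindep : Pairwise fun i j => IndepFun (w i) (w j) μ)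
    (hident : ∀ i, IdentDistrib (w i) (w i₀) μ μ) (hint : Integrable (w i₀) μ)
    (hmean : ∫ ω, w i₀ ω ∂μ = c) (hL2 : MemLp (fun ω => w i₀ ω - c) 2 μ)
    (hvar : ∫ ω, (w i₀ ω - c) ^ 2 ∂μ = 1) (i j : ι) :
    ∫ ω, (w i ω - c) * (w j ω - c) ∂μ = if i = j then 1 else 0 := by
  have hident_sub : ∀ i, IdentDistrib (fun ω => w i ω - c) (fun ω => w i₀ ω - c) μ μ :=
    fun i => (hident i).comp (measurable_sub_const c)
  refine integral_mul_eq_ite_of_indepFun (X := fun i ω => w i ω - c)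
    (fun i j hij => ?_) (fun i => (hident_sub i).symm.memLp_snd hL2) (fun i => ?_) (fun i => ?_) i j
  · exact (hindep hij).comp (measurable_sub_const c) (measurable_sub_const c)
  · rw [(hident_sub i).integral_eq, integral_sub hint (integrable_const c), hmean]
    simp
  · exact ((hident_sub i).comp (continuous_pow 2).measurable).integral_eq.trans hvar

end

namespace MeasureTheory

variable {α ι E : Type*} {m : MeasurableSpace α} {μ : Measure α} {l : Filter ι}

theorem TendstoInMeasure.add_tendsto [SeminormedAddCommGroup E] {f : ι → α → E} {c : ι → E}
    {c₀ : E} (hf : TendstoInMeasure μ f l 0) (hc : Tendsto c l (𝓝 c₀)) :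
    TendstoInMeasure μ (fun i x => f i x + c i) l (fun _ => c₀) := by
  rw [tendstoInMeasure_iff_norm] at hf ⊢
  intro ε hε
  have hclose : ∀ᶠ i in l, ‖c i - c₀‖ < ε / 2 :=
    (tendsto_iff_norm_sub_tendsto_zero.1 hc).eventually (gt_mem_nhds (half_pos hε))
  refine tendsto_of_tendsto_of_tendsto_of_le_of_le' tendsto_const_nhds (hf (ε / 2) (half_pos hε))
    (Eventually.of_forall fun _ => zero_le) ?_
  filter_upwards [hclose] with i hi
  refine measure_mono fun x (hx : ε ≤ ‖f i x + c i - c₀‖) =>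
    show ε / 2 ≤ ‖f i x - (0 : α → E) x‖ from ?_
  rw [Pi.zero_apply, sub_zero]
  rw [add_sub_assoc] at hx
  linarith [norm_add_le (f i x) (c i - c₀)]

theorem tendstoInMeasure_of_tendsto_integral_norm_sq [NormedAddCommGroup E] {f : ι → α → E}
    (hf : ∀ i, MemLp (f i) 2 μ) (h : Tendsto (fun i => ∫ x, ‖f i x‖ ^ 2 ∂μ) l (𝓝 0)) :
    TendstoInMeasure μ f l 0 := by
  refine tendstoInMeasure_of_tendsto_eLpNorm two_ne_zero (fun i => (hf i).1)
    aestronglyMeasurable_const ?_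
  have hnorm : ∀ i, eLpNorm (f i - 0) 2 μ = ENNReal.ofReal ((∫ x, ‖f i x‖ ^ 2 ∂μ) ^ (2 : ℝ)⁻¹) := by
    intro i
    rw [sub_zero, (hf i).eLpNorm_eq_integral_rpow_norm two_ne_zero ENNReal.ofNat_ne_top]
    simp
  simp_rw [hnorm]
  simpa using ENNReal.tendsto_ofReal (h.rpow_const (Or.inr (by norm_num : (0 : ℝ) ≤ 2⁻¹)))

theorem tendstoInMeasure_inv_smul_sum_smul [NormedAddCommGroup E] [InnerProductSpace ℝ E]
    {X : ℕ → α → ℝ} (hX : ∀ t, MemLp (X t) 2 μ)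
    (horth : ∀ s t, ∫ x, X s x * X t x ∂μ = if s = t then 1 else 0) {d : ℕ → ℕ → E}
    (hbdd : IsBoundedUnder (· ≤ ·) atTop
      (fun n : ℕ => (n : ℝ)⁻¹ * ∑ t ∈ Finset.Icc 1 n, ‖d t n‖ ^ 2)) :
    TendstoInMeasure μ
      (fun (n : ℕ) x => (n : ℝ)⁻¹ • ∑ t ∈ Finset.Icc 1 n, X t x • d t n) atTop 0 := by
  refine tendstoInMeasure_of_tendsto_integral_norm_sq
    (fun n => (memLp_sum_smul hX (Finset.Icc 1 n) (d · n)).const_smul (n : ℝ)⁻¹) ?_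
  have hmoment : ∀ n : ℕ, ∫ x, ‖(n : ℝ)⁻¹ • ∑ t ∈ Finset.Icc 1 n, X t x • d t n‖ ^ 2 ∂μ =
      (n : ℝ)⁻¹ * ((n : ℝ)⁻¹ * ∑ t ∈ Finset.Icc 1 n, ‖d t n‖ ^ 2) := by
    intro n
    simp_rw [norm_smul, mul_pow]
    rw [integral_const_mul, integral_norm_sum_smul_sq hX horth, norm_inv, Real.norm_natCast]
    ring
  simp_rw [hmoment]
  refine tendsto_inv_atTop_nhds_zero_nat.zero_mul_isBoundedUnder_le
    (hbdd.mono_le (Eventually.of_forall fun n => (Real.norm_of_nonneg ?_).le))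
  positivity

end MeasureTheory

theorem stmt_11_general
    {Ω : Type*} [MeasurableSpace Ω] (P : Measure Ω) [IsProbabilityMeasure P]
    (w : ℕ → Ω → ℝ)
    (hindep : iIndepFun w P)
    (hident : ∀ s t, IdentDistrib (w s) (w t) P P)
    (hint : Integrable (w 1) P) (hmean : ∫ ω, w 1 ω ∂P = 1)
    (hL2 : MemLp (fun ω => w 1 ω - 1) 2 P)
    (hvar : ∫ ω, (w 1 ω - 1) ^ 2 ∂P = 1)
    (k : ℕ)
    (d : ℕ → ℕ → EuclideanSpace ℝ (Fin k)) (dstar : EuclideanSpace ℝ (Fin k))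
    (hd : Tendsto (fun n : ℕ => (n : ℝ)⁻¹ • ∑ t ∈ Finset.Icc 1 n, d t n) atTop (nhds dstar))
    (hbdd : IsBoundedUnder (· ≤ ·) atTop
      (fun n : ℕ => (n : ℝ)⁻¹ * ∑ t ∈ Finset.Icc 1 n, ‖d t n‖ ^ 2)) :
    ∀ ε > (0 : ℝ),
      Tendsto (fun n : ℕ =>
          P {ω | ε < ‖(n : ℝ)⁻¹ • (∑ t ∈ Finset.Icc 1 n, w t ω • d t n) - dstar‖})
        atTop (nhds 0) := by
  set v : ℕ → Ω → ℝ := fun t ω => w t ω - 1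
  have hv_L2 : ∀ t, MemLp (v t) 2 P := fun t =>
    ((hident t 1).comp (measurable_sub_const 1)).symm.memLp_snd hL2
  have hv_orth : ∀ s t, ∫ ω, v s ω * v t ω ∂P = if s = t then 1 else 0 :=
    integral_sub_mul_sub_eq_ite (fun s t hst => hindep.indepFun hst) (fun t => hident t 1)
      hint hmean hL2 hvar
  have hfluct : TendstoInMeasure P
      (fun (n : ℕ) ω => (n : ℝ)⁻¹ • ∑ t ∈ Finset.Icc 1 n, v t ω • d t n) atTop 0 :=
    tendstoInMeasure_inv_smul_sum_smul hv_L2 hv_orth hbdd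
  have hsplit : ∀ (n : ℕ) ω, (n : ℝ)⁻¹ • (∑ t ∈ Finset.Icc 1 n, w t ω • d t n) =
      (n : ℝ)⁻¹ • ∑ t ∈ Finset.Icc 1 n, v t ω • d t n +
        (n : ℝ)⁻¹ • ∑ t ∈ Finset.Icc 1 n, d t n := by
    intro n ω
    simp [v, sub_smul, Finset.sum_sub_distrib, smul_sub]
  have hconv := tendstoInMeasure_iff_norm.1 (hfluct.add_tendsto hd)
  intro ε hε
  refine tendsto_of_tendsto_of_tendsto_of_le_of_le tendsto_const_nhds (hconv ε hε)
    (fun _ => zero_le) fun n => measure_mono fun ω (hω : ε < _) => ?_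
  rw [hsplit] at hω
  exact hω.le

/-- Random-weighting law of large numbers (Lemma S8, part 1): for i.i.d. weights `w_t`
with mean `1` and variance `1`, and a deterministic triangular array `d_{t,n}` in `ℝ^k`
with `(1/n) Σ_{t=1}^n d_{t,n} → d⋆` and `limsup (1/n) Σ_{t=1}^n ‖d_{t,n}‖² < ∞`,
`(1/n) Σ_{t=1}^n w_t d_{t,n} → d⋆` in probability. -/
theorem stmt_11
    {Ω : Type*} [MeasurableSpace Ω] (P : Measure Ω) [IsProbabilityMeasure P]
    (w : ℕ → Ω → ℝ) (hmeas : ∀ t, Measurable (w t))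
    (hindep : iIndepFun w P)
    (hident : ∀ s t, IdentDistrib (w s) (w t) P P)
    (hint : Integrable (w 1) P) (hmean : ∫ ω, w 1 ω ∂P = 1)
    (hL2 : MemLp (fun ω => w 1 ω - 1) 2 P)
    (hvar : ∫ ω, (w 1 ω - 1) ^ 2 ∂P = 1)
    (k : ℕ) (hk : 1 ≤ k)
    (d : ℕ → ℕ → EuclideanSpace ℝ (Fin k)) (dstar : EuclideanSpace ℝ (Fin k))
    (hd : Tendsto (fun n : ℕ => (n : ℝ)⁻¹ • ∑ t ∈ Finset.Icc 1 n, d t n) atTop (nhds dstar))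
    (hbdd : IsBoundedUnder (· ≤ ·) atTop
      (fun n : ℕ => (n : ℝ)⁻¹ * ∑ t ∈ Finset.Icc 1 n, ‖d t n‖ ^ 2)) :
    ∀ ε > (0 : ℝ),
      Tendsto (fun n : ℕ =>
          P {ω | ε < ‖(n : ℝ)⁻¹ • (∑ t ∈ Finset.Icc 1 n, w t ω • d t n) - dstar‖})
        atTop (nhds 0) :=
  stmt_11_general P w hindep hident hint hmean hL2 hvar k d dstar hd hbdd
end
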